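/- Let A ∈ ℝ^{n×n} be symmetric, y ∈ ℝ^n, L ∈ ℝ, β ≥ 0, and for U, Δ ∈ ℝ^{n×r} define the Hessian quadratic form H_U(Δ) := ⟨2(L·I_n + A) + y1_nᵀ + 1_n yᵀ, ΔΔᵀ⟩ + β‖(UΔᵀ + ΔUᵀ)1_n‖² + 2β⟨UUᵀ1_n − 1_n, ΔΔᵀ1_n⟩. Let U* ∈ ℝ^{n×r} satisfy U*(U*)ᵀ1_n = 1_n and ‖U*‖_op ≤ 1. Then for every U with ‖U − U*‖_F ≤ 1 and every Δ ∈ ℝ^{n×r}, |H_U(Δ) − H_{U*}(Δ)| ≤ 18 β n ‖U − U*‖_F ‖Δ‖_F². -/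

import Mathlib

open Matrix Finset

/-- The all-ones vector in `ℝ^n`. -/
noncomputable def ones (n : ℕ) : Fin n → ℝ := fun _ => 1

/-- Frobenius norm of a real matrix. -/
noncomputable def frob {n r : ℕ} (M : Matrix (Fin n) (Fin r) ℝ) : ℝ :=
  Real.sqrt (∑ i, ∑ j, (M i j) ^ 2)

/-- The `ℓ²→ℓ²` operator (spectral) norm of a real matrix. -/
noncomputable def opNorm {m n : ℕ} (M : Matrix (Fin m) (Fin n) ℝ) : ℝ :=
  ‖LinearMap.toContinuousLinearMap (Matrix.toEuclideanLin (𝕜 := ℝ) M)‖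

/-- The Hessian quadratic form of the augmented Lagrangian at `U`:
`H_U(Δ) = ⟨2(L·I + A) + y1ᵀ + 1yᵀ, ΔΔᵀ⟩ + β‖(UΔᵀ + ΔUᵀ)1‖² + 2β⟨UUᵀ1 − 1, ΔΔᵀ1⟩`. -/
noncomputable def hessForm {n r : ℕ} (A : Matrix (Fin n) (Fin n) ℝ) (y : Fin n → ℝ)
    (L β : ℝ) (U Δ : Matrix (Fin n) (Fin r) ℝ) : ℝ :=
  (∑ i, ∑ j, ((2 : ℝ) • (L • (1 : Matrix (Fin n) (Fin n) ℝ) + A)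
      + Matrix.vecMulVec y (ones n) + Matrix.vecMulVec (ones n) y) i j * (Δ * Δᵀ) i j)
    + β * ∑ i, (((U * Δᵀ + Δ * Uᵀ).mulVec (ones n)) i) ^ 2
    + 2 * β * dotProduct ((U * Uᵀ).mulVec (ones n) - ones n) ((Δ * Δᵀ).mulVec (ones n))


/-! Write `E = U - U*`, `S = U + U*` and `sym V W = V Wᵀ + W Vᵀ`. The linear part of the form
cancels in `H_U(Δ) - H_{U*}(Δ)`, and since `2 (U Uᵀ - U* U*ᵀ) = sym S E` the difference equals
`β (⟨sym E Δ 1, sym S Δ 1⟩ + ⟨sym S E 1, Δ Δᵀ 1⟩)`. If `‖V‖_op ≤ a` and `‖Vᵀ 1‖ ≤ a √n`, then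
`‖sym V W 1‖ ≤ 2 a ‖W‖_F √n`. This holds for `E` with `a = ‖E‖_F`, and for `S` with
`a = ‖E‖_F + 2 ≤ 3`, because `U* U*ᵀ 1 = 1` gives `‖U*ᵀ 1‖² = ⟨1, U* U*ᵀ 1⟩ = n`.
Cauchy–Schwarz then bounds the difference by `6 (‖E‖_F + 2) β n ‖E‖_F ‖Δ‖_F²`. -/

noncomputable def l2norm {ι : Type*} [Fintype ι] (v : ι → ℝ) : ℝ := ‖WithLp.toLp 2 v‖

section L2Norm

variable {ι : Type*} [Fintype ι]

lemma l2norm_nonneg (v : ι → ℝ) : 0 ≤ l2norm v := norm_nonneg _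

lemma l2norm_sq (v : ι → ℝ) : l2norm v ^ 2 = ∑ i, v i ^ 2 :=
  EuclideanSpace.real_norm_sq_eq _

lemma sum_sq_eq_dotProduct_self (v : ι → ℝ) : ∑ i, v i ^ 2 = v ⬝ᵥ v := by
  simp only [dotProduct, sq]

lemma l2norm_add_le (u v : ι → ℝ) : l2norm (u + v) ≤ l2norm u + l2norm v := by
  simpa only [l2norm, WithLp.toLp_add] using norm_add_le (WithLp.toLp 2 u) (WithLp.toLp 2 v)

lemma abs_dotProduct_le_l2norm_mul (u v : ι → ℝ) : |u ⬝ᵥ v| ≤ l2norm u * l2norm v := by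
  have := abs_real_inner_le_norm (WithLp.toLp 2 v : EuclideanSpace ℝ ι) (WithLp.toLp 2 u)
  simpa [l2norm, EuclideanSpace.inner_toLp_toLp, mul_comm] using this

lemma l2norm_eq_sqrt_card_of_sq_eq (v : ι → ℝ) (h : ∀ i, v i ^ 2 = 1) :
    l2norm v = √(Fintype.card ι) := by
  rw [← Real.sqrt_sq (l2norm_nonneg v), l2norm_sq]
  simp [h]

lemma dotProduct_self_sub_dotProduct_self (x y : ι → ℝ) :
    x ⬝ᵥ x - y ⬝ᵥ y = (x - y) ⬝ᵥ (x + y) := by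
  simp only [sub_dotProduct, dotProduct_add, dotProduct_comm y x]
  ring

lemma abs_dotProduct_le_of_l2norm_le {x y : ι → ℝ} {a b : ℝ}
    (hx : l2norm x ≤ a) (hy : l2norm y ≤ b) : |x ⬝ᵥ y| ≤ a * b :=
  (abs_dotProduct_le_l2norm_mul x y).trans
    (mul_le_mul hx hy (l2norm_nonneg y) ((l2norm_nonneg x).trans hx))

end L2Norm

lemma l2norm_ones (n : ℕ) : l2norm (ones n) = √n := by
  simpa using l2norm_eq_sqrt_card_of_sq_eq (ones n) fun _ => one_pow 2

section MatrixNorms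

variable {m k : ℕ}

lemma frob_nonneg (M : Matrix (Fin m) (Fin k) ℝ) : 0 ≤ frob M := Real.sqrt_nonneg _

lemma frob_transpose (M : Matrix (Fin m) (Fin k) ℝ) : frob Mᵀ = frob M := by
  unfold frob
  rw [Finset.sum_comm]
  rfl

lemma l2norm_mulVec_le_frob_mul (M : Matrix (Fin m) (Fin k) ℝ) (v : Fin k → ℝ) :
    l2norm (M *ᵥ v) ≤ frob M * l2norm v := by
  have hsq : ∑ i, (M *ᵥ v) i ^ 2 ≤ (∑ i, ∑ j, M i j ^ 2) * ∑ j, v j ^ 2 := by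
    rw [Finset.sum_mul]
    exact Finset.sum_le_sum fun i _ => Finset.sum_mul_sq_le_sq_mul_sq univ (M i) v
  rw [← Real.sqrt_sq (l2norm_nonneg _), ← Real.sqrt_sq (l2norm_nonneg v), l2norm_sq, l2norm_sq,
    frob, ← Real.sqrt_mul (by positivity)]
  exact Real.sqrt_le_sqrt hsq

lemma l2norm_mulVec_le_opNorm_mul (M : Matrix (Fin m) (Fin k) ℝ) (v : Fin k → ℝ) :
    l2norm (M *ᵥ v) ≤ opNorm M * l2norm v :=
  (LinearMap.toContinuousLinearMap (Matrix.toEuclideanLin (𝕜 := ℝ) M)).le_opNorm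
    (WithLp.toLp 2 v)

lemma opNorm_le_frob (M : Matrix (Fin m) (Fin k) ℝ) : opNorm M ≤ frob M :=
  ContinuousLinearMap.opNorm_le_bound _ (frob_nonneg M) fun v =>
    l2norm_mulVec_le_frob_mul M v.ofLp

lemma opNorm_add_le (M N : Matrix (Fin m) (Fin k) ℝ) : opNorm (M + N) ≤ opNorm M + opNorm N := by
  unfold opNorm
  rw [map_add, map_add]
  exact norm_add_le _ _

end MatrixNorms

def symProd {n r : ℕ} (V W : Matrix (Fin n) (Fin r) ℝ) : Matrix (Fin n) (Fin n) ℝ :=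
  V * Wᵀ + W * Vᵀ

section SymProd

variable {n r : ℕ}

lemma symProd_sub_left (U V W : Matrix (Fin n) (Fin r) ℝ) :
    symProd (U - V) W = symProd U W - symProd V W := by
  simp only [symProd, transpose_sub, Matrix.sub_mul, Matrix.mul_sub]
  abel

lemma symProd_add_left (U V W : Matrix (Fin n) (Fin r) ℝ) :
    symProd (U + V) W = symProd U W + symProd V W := by
  simp only [symProd, transpose_add, Matrix.add_mul, Matrix.mul_add]
  abel

lemma symProd_add_sub (U V : Matrix (Fin n) (Fin r) ℝ) :
    symProd (U + V) (U - V) = (2 : ℝ) • (U * Uᵀ - V * Vᵀ) := by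
  simp only [symProd, transpose_add, transpose_sub, Matrix.add_mul, Matrix.mul_add,
    Matrix.sub_mul, Matrix.mul_sub, two_smul]
  abel

lemma l2norm_symProd_mulVec_le (V W : Matrix (Fin n) (Fin r) ℝ) (w : Fin n → ℝ) :
    l2norm (symProd V W *ᵥ w) ≤ opNorm V * l2norm (Wᵀ *ᵥ w) + frob W * l2norm (Vᵀ *ᵥ w) := by
  rw [symProd, add_mulVec, ← mulVec_mulVec, ← mulVec_mulVec]
  exact (l2norm_add_le _ _).trans
    (add_le_add (l2norm_mulVec_le_opNorm_mul _ _) (l2norm_mulVec_le_frob_mul _ _))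

end SymProd

lemma hessForm_sub_hessForm {n r : ℕ} (A : Matrix (Fin n) (Fin n) ℝ) (y : Fin n → ℝ) (L β : ℝ)
    (U V Δ : Matrix (Fin n) (Fin r) ℝ) :
    hessForm A y L β U Δ - hessForm A y L β V Δ =
      β * ((symProd (U - V) Δ *ᵥ ones n) ⬝ᵥ (symProd (U + V) Δ *ᵥ ones n)
        + (symProd (U + V) (U - V) *ᵥ ones n) ⬝ᵥ ((Δ * Δᵀ) *ᵥ ones n)) := by
  rw [symProd_sub_left, symProd_add_left, sub_mulVec, add_mulVec,
    ← dotProduct_self_sub_dotProduct_self, symProd_add_sub, smul_mulVec, smul_dotProduct,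
    sub_mulVec]
  simp only [hessForm, symProd, sum_sq_eq_dotProduct_self, sub_dotProduct, smul_eq_mul]
  ring

section OnesVector

variable {n r : ℕ}

lemma l2norm_transpose_mulVec_ones_le (M : Matrix (Fin n) (Fin r) ℝ) :
    l2norm (Mᵀ *ᵥ ones n) ≤ frob M * √n := by
  simpa [frob_transpose, l2norm_ones] using l2norm_mulVec_le_frob_mul Mᵀ (ones n)

lemma l2norm_transpose_mulVec_of_mul_transpose_mulVec_eq {V : Matrix (Fin n) (Fin r) ℝ}
    {w : Fin n → ℝ} (hV : (V * Vᵀ) *ᵥ w = w) : l2norm (Vᵀ *ᵥ w) = l2norm w := by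
  have hsq : l2norm (Vᵀ *ᵥ w) ^ 2 = l2norm w ^ 2 := by
    rw [l2norm_sq, l2norm_sq, sum_sq_eq_dotProduct_self, sum_sq_eq_dotProduct_self,
      mulVec_transpose, ← dotProduct_mulVec, ← mulVec_transpose, mulVec_mulVec, hV]
  exact (pow_left_inj₀ (l2norm_nonneg _) (l2norm_nonneg _) two_ne_zero).1 hsq

lemma l2norm_symProd_mulVec_ones_le {V : Matrix (Fin n) (Fin r) ℝ} {a : ℝ}
    (hV : opNorm V ≤ a) (hV1 : l2norm (Vᵀ *ᵥ ones n) ≤ a * √n) (W : Matrix (Fin n) (Fin r) ℝ) :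
    l2norm (symProd V W *ᵥ ones n) ≤ 2 * a * frob W * √n := by
  have ha : 0 ≤ a := (norm_nonneg _).trans hV
  calc l2norm (symProd V W *ᵥ ones n)
      ≤ opNorm V * l2norm (Wᵀ *ᵥ ones n) + frob W * l2norm (Vᵀ *ᵥ ones n) :=
        l2norm_symProd_mulVec_le V W _
    _ ≤ a * (frob W * √n) + frob W * (a * √n) :=
        add_le_add (mul_le_mul hV (l2norm_transpose_mulVec_ones_le W) (l2norm_nonneg _) ha)
          (mul_le_mul_of_nonneg_left hV1 (frob_nonneg W))
    _ = 2 * a * frob W * √n := by ring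

lemma opNorm_add_le_frob_sub_add (U V : Matrix (Fin n) (Fin r) ℝ) :
    opNorm (U + V) ≤ frob (U - V) + 2 * opNorm V := by
  calc opNorm (U + V) = opNorm ((U - V) + V + V) := by rw [sub_add_cancel]
    _ ≤ opNorm (U - V) + opNorm V + opNorm V :=
        (opNorm_add_le _ _).trans (add_le_add_left (opNorm_add_le _ _) _)
    _ ≤ frob (U - V) + 2 * opNorm V := by linarith [opNorm_le_frob (U - V)]

lemma l2norm_transpose_add_mulVec_ones_le (U V : Matrix (Fin n) (Fin r) ℝ) :
    l2norm ((U + V)ᵀ *ᵥ ones n) ≤ frob (U - V) * √n + 2 * l2norm (Vᵀ *ᵥ ones n) := by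
  calc l2norm ((U + V)ᵀ *ᵥ ones n)
      = l2norm ((U - V)ᵀ *ᵥ ones n + Vᵀ *ᵥ ones n + Vᵀ *ᵥ ones n) := by
        rw [← add_mulVec, ← add_mulVec, ← transpose_add, ← transpose_add, sub_add_cancel]
    _ ≤ l2norm ((U - V)ᵀ *ᵥ ones n) + l2norm (Vᵀ *ᵥ ones n) + l2norm (Vᵀ *ᵥ ones n) :=
        (l2norm_add_le _ _).trans (add_le_add_left (l2norm_add_le _ _) _)
    _ ≤ frob (U - V) * √n + 2 * l2norm (Vᵀ *ᵥ ones n) := by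
        linarith [l2norm_transpose_mulVec_ones_le (U - V)]

end OnesVector

theorem hessian_local_stability_general {n r : ℕ}
    (A : Matrix (Fin n) (Fin n) ℝ)
    (y : Fin n → ℝ) (L β : ℝ) (hβ : 0 ≤ β)
    (Ustar : Matrix (Fin n) (Fin r) ℝ)
    (hUstar1 : (Ustar * Ustarᵀ).mulVec (ones n) = ones n)
    (hUstarOp : opNorm Ustar ≤ 1)
    (U : Matrix (Fin n) (Fin r) ℝ)
    (hclose : frob (U - Ustar) ≤ 1)
    (Δ : Matrix (Fin n) (Fin r) ℝ) :
    |hessForm A y L β U Δ - hessForm A y L β Ustar Δ| ≤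
      18 * β * n * frob (U - Ustar) * frob Δ ^ 2 := by
  set e := frob (U - Ustar)
  set d := frob Δ
  have hUstar_ones : l2norm (Ustarᵀ *ᵥ ones n) = √n := by
    rw [l2norm_transpose_mulVec_of_mul_transpose_mulVec_eq hUstar1, l2norm_ones]
  have hsum_op : opNorm (U + Ustar) ≤ e + 2 := by
    linarith [opNorm_add_le_frob_sub_add U Ustar]
  have hsum_ones : l2norm ((U + Ustar)ᵀ *ᵥ ones n) ≤ (e + 2) * √n := by
    linarith [l2norm_transpose_add_mulVec_ones_le U Ustar]
  have hdiff_Δ := l2norm_symProd_mulVec_ones_le (opNorm_le_frob (U - Ustar))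
    (l2norm_transpose_mulVec_ones_le (U - Ustar)) Δ
  have hsum_Δ := l2norm_symProd_mulVec_ones_le hsum_op hsum_ones Δ
  have hsum_diff := l2norm_symProd_mulVec_ones_le hsum_op hsum_ones (U - Ustar)
  have hΔΔ : l2norm ((Δ * Δᵀ) *ᵥ ones n) ≤ d * (d * √n) := by
    rw [← mulVec_mulVec]
    exact (l2norm_mulVec_le_frob_mul _ _).trans
      (mul_le_mul_of_nonneg_left (l2norm_transpose_mulVec_ones_le Δ) (frob_nonneg Δ))
  have he : 0 ≤ e := frob_nonneg _
  have hd : 0 ≤ d := frob_nonneg _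
  rw [hessForm_sub_hessForm, abs_mul, abs_of_nonneg hβ]
  calc β * |_|
      ≤ β * ((2 * e * d * √n) * (2 * (e + 2) * d * √n)
          + (2 * (e + 2) * e * √n) * (d * (d * √n))) :=
        mul_le_mul_of_nonneg_left ((abs_add_le _ _).trans (add_le_add
          (abs_dotProduct_le_of_l2norm_le hdiff_Δ hsum_Δ)
          (abs_dotProduct_le_of_l2norm_le hsum_diff hΔΔ))) hβ
    _ = 6 * (e + 2) * β * (√n * √n) * e * d ^ 2 := by ring
    _ ≤ 18 * β * n * e * d ^ 2 := by
        rw [Real.mul_self_sqrt (Nat.cast_nonneg n)]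
        have : 0 ≤ β * n * e * d ^ 2 := by positivity
        nlinarith

/-- Local stability of the Hessian quadratic form: if
`U*(U*)ᵀ1 = 1` and `‖U*‖_op ≤ 1`, then for every `U` with `‖U − U*‖_F ≤ 1` and
every `Δ`, `|H_U(Δ) − H_{U*}(Δ)| ≤ 18βn‖U − U*‖_F‖Δ‖_F²`. -/
theorem hessian_local_stability {n r : ℕ}
    (A : Matrix (Fin n) (Fin n) ℝ) (hA : Aᵀ = A)
    (y : Fin n → ℝ) (L β : ℝ) (hβ : 0 ≤ β)
    (Ustar : Matrix (Fin n) (Fin r) ℝ)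
    (hUstar1 : (Ustar * Ustarᵀ).mulVec (ones n) = ones n)
    (hUstarOp : opNorm Ustar ≤ 1)
    (U : Matrix (Fin n) (Fin r) ℝ)
    (hclose : frob (U - Ustar) ≤ 1)
    (Δ : Matrix (Fin n) (Fin r) ℝ) :
    |hessForm A y L β U Δ - hessForm A y L β Ustar Δ| ≤
      18 * β * n * frob (U - Ustar) * frob Δ ^ 2 :=
  hessian_local_stability_general A y L β hβ Ustar hUstar1 hUstarOp U hclose Δ
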